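/- Let d, s', n be positive integers, r > 0, A ∈ ℝ^{d×d}, and W_v ∈ ℝ^{s'×d}. Define single-head self-attention f by f(X)_{:,l} = Σ_{j=1}^m σ(X^T A X_{:,l})_j · W_v X_{:,j} for X ∈ ℝ^{d×m} (any m ≥ 1), with σ the softmax, and define masked self-attention f^m : ℝ^{d×n} → ℝ^{s'×n} by f^m(X)_{:,l} = f([X_{:,1}, …, X_{:,l}])_{:,l}, i.e., each token attends only to itself and its predecessors. Then for all X, X' ∈ ℝ^{d×n} with ‖X‖_F ≤ r and ‖X'‖_F ≤ r, ‖f^m(X) − f^m(X')‖_F ≤ √3 · ‖W_v‖₂ · √( ‖A‖₂² r⁴ (4n + 1) + n ) · ‖X − X'‖_F. -/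

import Mathlib

/-- Softmax of a real vector. -/
noncomputable def softmax {n : ℕ} (z : Fin n → ℝ) : Fin n → ℝ :=
  fun j => Real.exp (z j) / ∑ l, Real.exp (z l)

/-- Single-head self-attention of a query `x` within a context `X`, with score matrix
`A = Wₖᵀ W_q` and value matrix `Wv`: `∑ⱼ σ(Xᵀ A x)ⱼ • Wv X_{:,j}`. -/
noncomputable def satt {d s' : ℕ} (A : Matrix (Fin d) (Fin d) ℝ)
    (Wv : Matrix (Fin s') (Fin d) ℝ) {m : ℕ}
    (x : Fin d → ℝ) (X : Matrix (Fin d) (Fin m) ℝ) : Fin s' → ℝ :=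
  ∑ j, softmax (fun j' => dotProduct (fun i => X i j') (A.mulVec x)) j •
    Wv.mulVec (fun i => X i j)

/-- Frobenius norm of a real matrix. -/
noncomputable def frob {d m : ℕ} (A : Matrix (Fin d) (Fin m) ℝ) : ℝ :=
  Real.sqrt (∑ i, ∑ j, (A i j) ^ 2)

/-- Euclidean norm of a real vector. -/
noncomputable def eucNorm {n : ℕ} (v : Fin n → ℝ) : ℝ :=
  Real.sqrt (∑ i, v i ^ 2)

/-- Spectral (ℓ²-operator) norm of a real matrix. -/
noncomputable def specNorm {a b : ℕ} (W : Matrix (Fin a) (Fin b) ℝ) : ℝ :=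
  sSup {c : ℝ | ∃ x : Fin b → ℝ, eucNorm x ≤ 1 ∧ c = eucNorm (W.mulVec x)}

/-- The first `l + 1` columns of `X` (for `l : Fin n`). -/
def firstCols {d n : ℕ} (X : Matrix (Fin d) (Fin n) ℝ) (l : Fin n) :
    Matrix (Fin d) (Fin (l.1 + 1)) ℝ :=
  Matrix.of fun i j => X i (Fin.castLE l.isLt j)

/-- Masked single-head self-attention: token `l` attends only to itself and its
predecessors, `fᵐ(X)_{:,l} = f([X_{:,1}, …, X_{:,l}])_{:,l}`. -/
noncomputable def maskedSatt {d s' n : ℕ} (A : Matrix (Fin d) (Fin d) ℝ)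
    (Wv : Matrix (Fin s') (Fin d) ℝ)
    (X : Matrix (Fin d) (Fin n) ℝ) : Matrix (Fin s') (Fin n) ℝ :=
  Matrix.of fun i l => satt A Wv (fun i' => X i' l) (firstCols X l) i

namespace Aux
open Finset Real

variable {k : ℕ}

lemma sumexp_pos (z : Fin (k+1) → ℝ) : 0 < ∑ i, Real.exp (z i) :=
  Finset.sum_pos (fun i _ => Real.exp_pos _) ⟨0, Finset.mem_univ 0⟩

lemma softmax_nonneg (z : Fin (k+1) → ℝ) (j : Fin (k+1)) : 0 ≤ softmax z j :=
  div_nonneg (Real.exp_pos _).le (sumexp_pos z).le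

lemma softmax_sum_one (z : Fin (k+1) → ℝ) : ∑ j, softmax z j = 1 := by
  simp only [softmax, ← Finset.sum_div]
  exact div_self (sumexp_pos z).ne'

lemma softmax_le_one (z : Fin (k+1) → ℝ) (j : Fin (k+1)) : softmax z j ≤ 1 := by
  have h := softmax_sum_one z
  have := Finset.single_le_sum (f := softmax z) (fun i _ => softmax_nonneg z i) (Finset.mem_univ j)
  linarith

lemma hasDerivAt_softmax (z u : Fin (k+1) → ℝ) (j : Fin (k+1)) (t : ℝ) :
    HasDerivAt (fun s => softmax (fun i => z i + s * u i) j)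
      (softmax (fun i => z i + t * u i) j *
        (u j - ∑ i, softmax (fun i => z i + t * u i) i * u i)) t := by
  have hS : (0:ℝ) < ∑ i, Real.exp (z i + t * u i) := sumexp_pos _
  have hN : ∀ i : Fin (k+1), HasDerivAt (fun s => Real.exp (z i + s * u i))
      (Real.exp (z i + t * u i) * u i) t := by
    intro i
    have h1 : HasDerivAt (fun s : ℝ => z i + s * u i) (u i) t := by
      simpa using (hasDerivAt_id t).mul_const (u i) |>.const_add (z i)
    simpa [mul_comm] using h1.exp
  have hD : HasDerivAt (fun s => ∑ i, Real.exp (z i + s * u i))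
      (∑ i, Real.exp (z i + t * u i) * u i) t := HasDerivAt.fun_sum (fun i _ => hN i)
  have h := (hN j).fun_div hD hS.ne'
  refine h.congr_deriv ?_
  simp only [softmax]
  rw [Finset.sum_congr rfl (fun i _ => div_mul_eq_mul_div (Real.exp (z i + t * u i)) _ (u i)),
    ← Finset.sum_div]
  field_simp

end Aux

namespace Aux
variable {k : ℕ}
-- derivative as a full pi-function, into EuclideanSpace
lemma test (z u : Fin (k+1) → ℝ) (t : ℝ) :
    HasDerivAt (fun s => (WithLp.equiv 2 (Fin (k+1) → ℝ)).symm
        (softmax (fun i => z i + s * u i)))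
      ((WithLp.equiv 2 (Fin (k+1) → ℝ)).symm
        (fun j => softmax (fun i => z i + t * u i) j *
          (u j - ∑ i, softmax (fun i => z i + t * u i) i * u i))) t := by
  have hg : HasDerivAt (fun s => (softmax (fun i => z i + s * u i) : Fin (k+1) → ℝ))
      (fun j => softmax (fun i => z i + t * u i) j *
        (u j - ∑ i, softmax (fun i => z i + t * u i) i * u i)) t :=
    hasDerivAt_pi.2 (fun j => hasDerivAt_softmax z u j t)
  exact ((PiLp.continuousLinearEquiv 2 ℝ (fun _ : Fin (k+1) => ℝ)).symm
    : (Fin (k+1) → ℝ) →L[ℝ] EuclideanSpace ℝ (Fin (k+1))).hasFDerivAt.comp_hasDerivAt t hg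
end Aux


namespace Aux2
open Aux
variable {k : ℕ}

lemma deriv_sq_bound (q u : Fin (k+1) → ℝ) (hq0 : ∀ j, 0 ≤ q j) (hq1 : ∀ j, q j ≤ 1)
    (hqs : ∑ j, q j = 1) :
    ∑ j, (q j * (u j - ∑ i, q i * u i))^2 ≤ ∑ j, (u j)^2 := by
  set s := ∑ i, q i * u i with hs
  have h1 : ∀ j, (q j * (u j - s))^2 ≤ q j * (u j - s)^2 := by
    intro j
    have : (q j)^2 ≤ q j := by nlinarith [hq0 j, hq1 j]
    calc (q j * (u j - s))^2 = (q j)^2 * (u j - s)^2 := by ring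
    _ ≤ q j * (u j - s)^2 := by nlinarith [sq_nonneg (u j - s)]
  calc ∑ j, (q j * (u j - s))^2 ≤ ∑ j, q j * (u j - s)^2 :=
        Finset.sum_le_sum (fun j _ => h1 j)
    _ = ∑ j, q j * (u j)^2 - s^2 := by
        have : ∀ j ∈ Finset.univ, q j * (u j - s)^2
            = q j * (u j)^2 - 2 * s * (q j * u j) + s^2 * q j := fun j _ => by ring
        rw [Finset.sum_congr rfl this, Finset.sum_add_distrib, Finset.sum_sub_distrib,
          ← Finset.mul_sum, ← Finset.mul_sum, ← hs, hqs]
        ring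
    _ ≤ ∑ j, q j * (u j)^2 := by nlinarith [sq_nonneg s]
    _ ≤ ∑ j, (u j)^2 := Finset.sum_le_sum (fun j _ => by nlinarith [hq0 j, hq1 j, sq_nonneg (u j)])

lemma softmax_l2_lipschitz (z w : Fin (k+1) → ℝ) :
    Real.sqrt (∑ j, (softmax w j - softmax z j)^2) ≤ Real.sqrt (∑ j, (w j - z j)^2) := by
  set u : Fin (k+1) → ℝ := fun i => w i - z i with hu
  set F : ℝ → EuclideanSpace ℝ (Fin (k+1)) := fun s =>
    (WithLp.equiv 2 (Fin (k+1) → ℝ)).symm (softmax (fun i => z i + s * u i)) with hF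
  set F' : ℝ → EuclideanSpace ℝ (Fin (k+1)) := fun t =>
    (WithLp.equiv 2 (Fin (k+1) → ℝ)).symm
      (fun j => softmax (fun i => z i + t * u i) j *
        (u j - ∑ i, softmax (fun i => z i + t * u i) i * u i)) with hF'
  have hder : ∀ t ∈ Set.Icc (0:ℝ) 1, HasDerivWithinAt F (F' t) (Set.Icc (0:ℝ) 1) t :=
    fun t _ => (Aux.test z u t).hasDerivWithinAt
  have hbound : ∀ t ∈ Set.Ico (0:ℝ) 1, ‖F' t‖ ≤ Real.sqrt (∑ j, (u j)^2) := by
    intro t _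
    rw [EuclideanSpace.norm_eq]
    apply Real.sqrt_le_sqrt
    calc ∑ x, ‖F' t x‖^2
        = ∑ j, (softmax (fun i => z i + t * u i) j *
            (u j - ∑ i, softmax (fun i => z i + t * u i) i * u i))^2 := by
          apply Finset.sum_congr rfl; intro j _
          rw [Real.norm_eq_abs, sq_abs]
          rfl
      _ ≤ ∑ j, (u j)^2 := deriv_sq_bound (softmax (fun i => z i + t * u i)) u
            (softmax_nonneg _) (softmax_le_one _) (softmax_sum_one _)
  have key := norm_image_sub_le_of_norm_deriv_le_segment_01' hder hbound
  have hF1 : F 1 = (WithLp.equiv 2 (Fin (k+1) → ℝ)).symm (softmax w) := by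
    simp only [hF]; congr 1; funext i; simp [hu]
  have hF0 : F 0 = (WithLp.equiv 2 (Fin (k+1) → ℝ)).symm (softmax z) := by
    simp only [hF]; congr 1; funext i; simp
  rw [hF1, hF0] at key
  calc Real.sqrt (∑ j, (softmax w j - softmax z j)^2)
      = ‖(WithLp.equiv 2 (Fin (k+1) → ℝ)).symm (softmax w)
          - (WithLp.equiv 2 (Fin (k+1) → ℝ)).symm (softmax z)‖ := by
        rw [EuclideanSpace.norm_eq]
        congr 1; apply Finset.sum_congr rfl; intro j _
        rw [Real.norm_eq_abs, sq_abs]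
        rfl
    _ ≤ Real.sqrt (∑ j, (u j)^2) := key
    _ = Real.sqrt (∑ j, (w j - z j)^2) := rfl
end Aux2

namespace Aux3
open Aux
variable {k : ℕ}

lemma test1 (z u : Fin (k+1) → ℝ) (t : ℝ) :
    HasDerivAt (fun s => (WithLp.equiv 1 (Fin (k+1) → ℝ)).symm
        (softmax (fun i => z i + s * u i)))
      ((WithLp.equiv 1 (Fin (k+1) → ℝ)).symm
        (fun j => softmax (fun i => z i + t * u i) j *
          (u j - ∑ i, softmax (fun i => z i + t * u i) i * u i))) t := by
  have hg : HasDerivAt (fun s => (softmax (fun i => z i + s * u i) : Fin (k+1) → ℝ))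
      (fun j => softmax (fun i => z i + t * u i) j *
        (u j - ∑ i, softmax (fun i => z i + t * u i) i * u i)) t :=
    hasDerivAt_pi.2 (fun j => hasDerivAt_softmax z u j t)
  exact ((PiLp.continuousLinearEquiv 1 ℝ (fun _ : Fin (k+1) => ℝ)).symm
    : (Fin (k+1) → ℝ) →L[ℝ] PiLp 1 (fun _ : Fin (k+1) => ℝ)).hasFDerivAt.comp_hasDerivAt t hg

lemma norm_piLp_one (v : PiLp 1 (fun _ : Fin (k+1) => ℝ)) : ‖v‖ = ∑ j, |v j| := by
  rw [PiLp.norm_eq_sum (by norm_num : 0 < (1:ENNReal).toReal)]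
  simp [Real.norm_eq_abs]

lemma deriv_abs_bound (q u : Fin (k+1) → ℝ) (hq0 : ∀ j, 0 ≤ q j)
    (hqs : ∑ j, q j = 1) (M : ℝ) (hM : ∀ j, |u j| ≤ M) :
    ∑ j, |q j * (u j - ∑ i, q i * u i)| ≤ 2 * M := by
  set s := ∑ i, q i * u i with hs
  have hsabs : |s| ≤ M := by
    calc |s| ≤ ∑ i, |q i * u i| := Finset.abs_sum_le_sum_abs _ _
      _ ≤ ∑ i, q i * M := Finset.sum_le_sum (fun i _ => by
          rw [abs_mul, abs_of_nonneg (hq0 i)]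
          exact mul_le_mul_of_nonneg_left (hM i) (hq0 i))
      _ = M := by rw [← Finset.sum_mul, hqs, one_mul]
  calc ∑ j, |q j * (u j - s)| ≤ ∑ j, q j * (|u j| + |s|) :=
        Finset.sum_le_sum (fun j _ => by
          rw [abs_mul, abs_of_nonneg (hq0 j)]
          exact mul_le_mul_of_nonneg_left (abs_sub (u j) s) (hq0 j))
    _ ≤ ∑ j, q j * (M + M) := Finset.sum_le_sum (fun j _ => by
        have := hM j; have := hq0 j; nlinarith [hsabs])
    _ = 2 * M := by rw [← Finset.sum_mul, hqs]; ring

lemma softmax_l1_lipschitz (z w : Fin (k+1) → ℝ) (M : ℝ) (hM : ∀ j, |w j - z j| ≤ M) :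
    ∑ j, |softmax w j - softmax z j| ≤ 2 * M := by
  set u : Fin (k+1) → ℝ := fun i => w i - z i with hu
  set F : ℝ → PiLp 1 (fun _ : Fin (k+1) => ℝ) := fun s =>
    (WithLp.equiv 1 (Fin (k+1) → ℝ)).symm (softmax (fun i => z i + s * u i)) with hF
  set F' : ℝ → PiLp 1 (fun _ : Fin (k+1) => ℝ) := fun t =>
    (WithLp.equiv 1 (Fin (k+1) → ℝ)).symm
      (fun j => softmax (fun i => z i + t * u i) j *
        (u j - ∑ i, softmax (fun i => z i + t * u i) i * u i)) with hF'
  have hder : ∀ t ∈ Set.Icc (0:ℝ) 1, HasDerivWithinAt F (F' t) (Set.Icc (0:ℝ) 1) t :=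
    fun t _ => (test1 z u t).hasDerivWithinAt
  have hbound : ∀ t ∈ Set.Ico (0:ℝ) 1, ‖F' t‖ ≤ 2 * M := by
    intro t _
    rw [norm_piLp_one]
    calc ∑ j, |F' t j|
        = ∑ j, |softmax (fun i => z i + t * u i) j *
            (u j - ∑ i, softmax (fun i => z i + t * u i) i * u i)| := by
          apply Finset.sum_congr rfl; intro j _
          rfl
      _ ≤ 2 * M := deriv_abs_bound (softmax (fun i => z i + t * u i)) u
            (softmax_nonneg _) (softmax_sum_one _) M hM
  have key := norm_image_sub_le_of_norm_deriv_le_segment_01' hder hbound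
  have hF1 : F 1 = (WithLp.equiv 1 (Fin (k+1) → ℝ)).symm (softmax w) := by
    simp only [hF]; congr 1; funext i; simp [hu]
  have hF0 : F 0 = (WithLp.equiv 1 (Fin (k+1) → ℝ)).symm (softmax z) := by
    simp only [hF]; congr 1; funext i; simp
  rw [hF1, hF0] at key
  calc ∑ j, |softmax w j - softmax z j|
      = ‖(WithLp.equiv 1 (Fin (k+1) → ℝ)).symm (softmax w)
          - (WithLp.equiv 1 (Fin (k+1) → ℝ)).symm (softmax z)‖ := by
        rw [norm_piLp_one]
        apply Finset.sum_congr rfl; intro j _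
        rfl
    _ ≤ 2 * M := key
end Aux3

namespace NrmAux
open Finset Real

lemma eucNorm_nonneg {n : ℕ} (v : Fin n → ℝ) : 0 ≤ eucNorm v := Real.sqrt_nonneg _
lemma frob_nonneg {d m : ℕ} (A : Matrix (Fin d) (Fin m) ℝ) : 0 ≤ frob A := Real.sqrt_nonneg _

lemma eucNorm_sq {n : ℕ} (v : Fin n → ℝ) : (eucNorm v)^2 = ∑ i, v i ^ 2 :=
  Real.sq_sqrt (Finset.sum_nonneg fun i _ => sq_nonneg _)

lemma frob_sq {d m : ℕ} (A : Matrix (Fin d) (Fin m) ℝ) : (frob A)^2 = ∑ i, ∑ j, (A i j)^2 :=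
  Real.sq_sqrt (Finset.sum_nonneg fun i _ => Finset.sum_nonneg fun j _ => sq_nonneg _)

lemma eucNorm_le_of_sq_le {n : ℕ} (v : Fin n → ℝ) {c : ℝ} (hc : 0 ≤ c)
    (h : ∑ i, v i ^ 2 ≤ c ^ 2) : eucNorm v ≤ c := by
  rw [eucNorm, show c = Real.sqrt (c^2) by rw [Real.sqrt_sq hc]]
  exact Real.sqrt_le_sqrt h

lemma abs_dot_le {n : ℕ} (a b : Fin n → ℝ) :
    |dotProduct a b| ≤ eucNorm a * eucNorm b := by
  rw [← Real.sqrt_sq_eq_abs, eucNorm, eucNorm, ← Real.sqrt_mul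
    (Finset.sum_nonneg fun i _ => sq_nonneg _)]
  exact Real.sqrt_le_sqrt (Finset.sum_mul_sq_le_sq_mul_sq Finset.univ a b)

lemma eucNorm_mulVec_le_frob {a b : ℕ} (W : Matrix (Fin a) (Fin b) ℝ) (x : Fin b → ℝ) :
    eucNorm (W.mulVec x) ≤ frob W * eucNorm x := by
  apply eucNorm_le_of_sq_le _ (mul_nonneg (frob_nonneg W) (eucNorm_nonneg x))
  rw [mul_pow, frob_sq, eucNorm_sq, Finset.sum_mul]
  apply Finset.sum_le_sum
  intro i _
  exact Finset.sum_mul_sq_le_sq_mul_sq Finset.univ (fun j => W i j) x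

lemma specNorm_bddAbove {a b : ℕ} (W : Matrix (Fin a) (Fin b) ℝ) :
    BddAbove {c : ℝ | ∃ x : Fin b → ℝ, eucNorm x ≤ 1 ∧ c = eucNorm (W.mulVec x)} := by
  refine ⟨frob W, ?_⟩
  rintro c ⟨x, hx, rfl⟩
  calc eucNorm (W.mulVec x) ≤ frob W * eucNorm x := eucNorm_mulVec_le_frob W x
    _ ≤ frob W * 1 := mul_le_mul_of_nonneg_left hx (frob_nonneg W)
    _ = frob W := mul_one _

lemma specNorm_nonneg {a b : ℕ} (W : Matrix (Fin a) (Fin b) ℝ) : 0 ≤ specNorm W := by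
  have h0 : (0:ℝ) ∈ {c : ℝ | ∃ x : Fin b → ℝ, eucNorm x ≤ 1 ∧ c = eucNorm (W.mulVec x)} := by
    refine ⟨0, ?_, ?_⟩
    · simp [eucNorm]
    · simp [Matrix.mulVec_zero, eucNorm]
  exact le_csSup (specNorm_bddAbove W) h0

lemma eucNorm_smul {n : ℕ} (c : ℝ) (v : Fin n → ℝ) :
    eucNorm (fun i => c * v i) = |c| * eucNorm v := by
  rw [eucNorm, eucNorm, ← Real.sqrt_sq_eq_abs, ← Real.sqrt_mul (sq_nonneg c),
    Finset.mul_sum]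
  congr 1
  exact Finset.sum_congr rfl fun i _ => by ring

lemma eucNorm_zero_iff {n : ℕ} (x : Fin n → ℝ) (h : eucNorm x = 0) : ∀ i, x i = 0 := by
  intro i
  have hsum : ∑ i, x i ^ 2 = 0 := by
    have h2 := eucNorm_sq x
    rw [h] at h2; simpa using h2.symm
  have := (Finset.sum_eq_zero_iff_of_nonneg (fun i _ => sq_nonneg (x i))).1 hsum i
    (Finset.mem_univ i)
  exact pow_eq_zero_iff two_ne_zero |>.1 this

lemma eucNorm_mulVec_le_spec {a b : ℕ} (W : Matrix (Fin a) (Fin b) ℝ) (x : Fin b → ℝ) :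
    eucNorm (W.mulVec x) ≤ specNorm W * eucNorm x := by
  rcases eq_or_lt_of_le (eucNorm_nonneg x) with h0 | hpos
  · have hx0 : x = 0 := funext (eucNorm_zero_iff x h0.symm)
    subst hx0
    simp only [Matrix.mulVec_zero, ← h0, mul_zero]
    simp [eucNorm]
  · set t := eucNorm x with ht
    set y : Fin b → ℝ := t⁻¹ • x with hy
    have hyn : eucNorm y = 1 := by
      have : eucNorm y = |t⁻¹| * eucNorm x := by
        rw [hy]; exact eucNorm_smul t⁻¹ x
      rw [this, abs_of_pos (inv_pos.2 hpos), ← ht, inv_mul_cancel₀ hpos.ne']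
    have hmem : eucNorm (W.mulVec y) ∈
        {c : ℝ | ∃ x : Fin b → ℝ, eucNorm x ≤ 1 ∧ c = eucNorm (W.mulVec x)} :=
      ⟨y, le_of_eq hyn, rfl⟩
    have hle : eucNorm (W.mulVec y) ≤ specNorm W := le_csSup (specNorm_bddAbove W) hmem
    have hWy : eucNorm (W.mulVec y) = t⁻¹ * eucNorm (W.mulVec x) := by
      rw [hy, Matrix.mulVec_smul]
      have : (t⁻¹ • W.mulVec x) = fun i => t⁻¹ * (W.mulVec x) i := rfl
      rw [this, eucNorm_smul, abs_of_pos (inv_pos.2 hpos)]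
    rw [hWy] at hle
    calc eucNorm (W.mulVec x) = t * (t⁻¹ * eucNorm (W.mulVec x)) := by
          field_simp
      _ ≤ t * specNorm W := mul_le_mul_of_nonneg_left hle hpos.le
      _ = specNorm W * t := mul_comm _ _
end NrmAux

namespace NrmAux
open Finset Real

lemma eucNorm_triangle {d : ℕ} (a b : Fin d → ℝ) :
    eucNorm (fun i => a i + b i) ≤ eucNorm a + eucNorm b := by
  apply eucNorm_le_of_sq_le _ (add_nonneg (eucNorm_nonneg a) (eucNorm_nonneg b))
  have hab : ∑ i, a i * b i ≤ eucNorm a * eucNorm b :=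
    le_trans (le_abs_self _) (abs_dot_le a b)
  have ha := eucNorm_sq a
  have hb := eucNorm_sq b
  have : ∑ i, (a i + b i)^2 = (∑ i, a i ^2) + 2 * (∑ i, a i * b i) + (∑ i, b i ^2) := by
    rw [Finset.mul_sum, ← Finset.sum_add_distrib, ← Finset.sum_add_distrib]
    exact Finset.sum_congr rfl fun i _ => by ring
  nlinarith [eucNorm_nonneg a, eucNorm_nonneg b]

lemma eucNorm_sum_le {d : ℕ} {ι : Type*} (s : Finset ι) (f : ι → Fin d → ℝ) :
    eucNorm (fun i => ∑ j ∈ s, f j i) ≤ ∑ j ∈ s, eucNorm (f j) := by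
  classical
  induction s using Finset.cons_induction with
  | empty => simp [eucNorm]
  | cons a s ha ih =>
      rw [Finset.sum_cons]
      calc eucNorm (fun i => ∑ j ∈ Finset.cons a s ha, f j i)
          = eucNorm (fun i => f a i + ∑ j ∈ s, f j i) := by
            congr 1; funext i; rw [Finset.sum_cons]
        _ ≤ eucNorm (f a) + eucNorm (fun i => ∑ j ∈ s, f j i) := eucNorm_triangle _ _
        _ ≤ eucNorm (f a) + ∑ j ∈ s, eucNorm (f j) := by linarith [ih]

lemma eucNorm_weighted_le {d m : ℕ} (c : Fin m → ℝ) (v : Fin m → Fin d → ℝ) {K : ℝ}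
    (hK : ∀ j, eucNorm (v j) ≤ K) (hK0 : 0 ≤ K) :
    eucNorm (fun i => ∑ j, c j * v j i) ≤ (∑ j, |c j|) * K := by
  calc eucNorm (fun i => ∑ j, c j * v j i)
      ≤ ∑ j, eucNorm (fun i => c j * v j i) := eucNorm_sum_le Finset.univ _
    _ = ∑ j, |c j| * eucNorm (v j) := Finset.sum_congr rfl fun j _ => eucNorm_smul _ _
    _ ≤ ∑ j, |c j| * K := Finset.sum_le_sum fun j _ =>
        mul_le_mul_of_nonneg_left (hK j) (abs_nonneg _)
    _ = (∑ j, |c j|) * K := by rw [Finset.sum_mul]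

lemma eucNorm_col_le_frob {d m : ℕ} (M : Matrix (Fin d) (Fin m) ℝ) (j : Fin m) :
    eucNorm (fun i => M i j) ≤ frob M := by
  apply eucNorm_le_of_sq_le _ (frob_nonneg M)
  rw [frob_sq]
  exact Finset.sum_le_sum fun i _ =>
    Finset.single_le_sum (f := fun j' => (M i j')^2) (fun j' _ => sq_nonneg _)
      (Finset.mem_univ j)

lemma frob_transpose {d m : ℕ} (M : Matrix (Fin d) (Fin m) ℝ) : frob (Matrix.transpose M) = frob M := by
  unfold frob
  rw [Finset.sum_comm]
  rfl

lemma eucNorm_colsdot_le {d m : ℕ} (Y : Matrix (Fin d) (Fin m) ℝ) (u : Fin d → ℝ) :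
    eucNorm (fun j => dotProduct (fun i => Y i j) u) ≤ frob Y * eucNorm u := by
  have : (fun j => dotProduct (fun i => Y i j) u) = (Matrix.transpose Y).mulVec u := rfl
  rw [this, ← frob_transpose Y]
  exact eucNorm_mulVec_le_frob (Matrix.transpose Y) u

lemma frob_firstCols_le {d n : ℕ} (M : Matrix (Fin d) (Fin n) ℝ) (l : Fin n) :
    frob (firstCols M l) ≤ frob M := by
  unfold frob
  apply Real.sqrt_le_sqrt
  apply Finset.sum_le_sum
  intro i _
  have := Finset.sum_map (Finset.univ : Finset (Fin (l.1+1)))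
    ⟨Fin.castLE l.isLt, Fin.castLE_injective _⟩ (fun j => (M i j)^2)
  calc ∑ j, (firstCols M l i j)^2
      = ∑ j ∈ (Finset.univ : Finset (Fin (l.1+1))).map
          ⟨Fin.castLE l.isLt, Fin.castLE_injective _⟩, (M i j)^2 := by
        rw [this]; rfl
    _ ≤ ∑ j, (M i j)^2 := Finset.sum_le_sum_of_subset_of_nonneg
        (Finset.subset_univ _) (fun j _ _ => sq_nonneg _)

lemma frob_sq_eq_sum_cols {d n : ℕ} (M : Matrix (Fin d) (Fin n) ℝ) :
    (frob M)^2 = ∑ l, (eucNorm (fun i => M i l))^2 := by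
  rw [frob_sq, Finset.sum_comm]
  exact Finset.sum_congr rfl fun l _ => (eucNorm_sq _).symm

end NrmAux

namespace MainAux
open Aux Aux2 Aux3 NrmAux Finset

lemma satt_eq_mulVec {d s' m : ℕ} (A : Matrix (Fin d) (Fin d) ℝ)
    (Wv : Matrix (Fin s') (Fin d) ℝ) (x : Fin d → ℝ) (Y : Matrix (Fin d) (Fin m) ℝ) :
    satt A Wv x Y = Wv.mulVec (fun i =>
      ∑ j, softmax (fun j' => dotProduct (fun i' => Y i' j') (A.mulVec x)) j * Y i j) := by
  funext i
  simp only [satt, Finset.sum_apply, Pi.smul_apply, smul_eq_mul, Matrix.mulVec,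
    dotProduct]
  simp_rw [Finset.mul_sum]
  rw [Finset.sum_comm]
  apply Finset.sum_congr rfl; intro i' _
  apply Finset.sum_congr rfl; intro j _
  ring

lemma satt_diff_bound {d s' k : ℕ} (A : Matrix (Fin d) (Fin d) ℝ)
    (Wv : Matrix (Fin s') (Fin d) ℝ) (x x' : Fin d → ℝ)
    (Y Y' : Matrix (Fin d) (Fin (k+1)) ℝ) (r : ℝ)
    (hY' : frob Y' ≤ r) (hx : eucNorm x ≤ r) (hr : 0 ≤ r) :
    eucNorm (fun i => satt A Wv x Y i - satt A Wv x' Y' i) ≤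
      specNorm Wv * (frob (Y - Y') + 2 * specNorm A * r^2 * frob (Y - Y')
        + specNorm A * r^2 * eucNorm (fun i => x i - x' i)) := by
  set u : Fin d → ℝ := fun i => x i - x' i with hu
  set zp : Fin (k+1) → ℝ := fun j' => dotProduct (fun i => Y i j') (A.mulVec x) with hzp
  set zq : Fin (k+1) → ℝ := fun j' => dotProduct (fun i => Y' i j') (A.mulVec x) with hzq
  set zr : Fin (k+1) → ℝ := fun j' => dotProduct (fun i => Y' i j') (A.mulVec x') with hzr
  set p : Fin (k+1) → ℝ := softmax zp with hp
  set q : Fin (k+1) → ℝ := softmax zq with hq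
  set p'' : Fin (k+1) → ℝ := softmax zr with hp''
  set T : Fin d → ℝ := fun i => (∑ j, p j * Y i j) - ∑ j, p'' j * Y' i j with hT
  set T1 : Fin d → ℝ := fun i => ∑ j, p j * (Y - Y') i j with hT1
  set T2 : Fin d → ℝ := fun i => ∑ j, (p j - q j) * Y' i j with hT2
  set T3 : Fin d → ℝ := fun i => ∑ j, (q j - p'' j) * Y' i j with hT3
  have hA0 : 0 ≤ specNorm A := specNorm_nonneg A
  have hF0 : 0 ≤ frob (Y - Y') := frob_nonneg _
  -- step 1
  have hstep1 : (fun i => satt A Wv x Y i - satt A Wv x' Y' i) = Wv.mulVec T := by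
    funext i
    rw [satt_eq_mulVec, satt_eq_mulVec]
    simp only [Matrix.mulVec, dotProduct]
    rw [← Finset.sum_sub_distrib]
    apply Finset.sum_congr rfl; intro i' _
    rw [← mul_sub]
    rfl
  -- step split
  have hsplit : ∀ i, T i = T1 i + (T2 i + T3 i) := by
    intro i
    simp only [hT, hT1, hT2, hT3, Matrix.sub_apply]
    rw [← Finset.sum_add_distrib, ← Finset.sum_add_distrib, ← Finset.sum_sub_distrib]
    apply Finset.sum_congr rfl; intro j _; ring
  -- bound T1
  have hB1 : eucNorm T1 ≤ frob (Y - Y') := by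
    have h := eucNorm_weighted_le p (fun j i => (Y - Y') i j)
      (fun j => eucNorm_col_le_frob (Y - Y') j) hF0
    have habs : ∑ j, |p j| = 1 := by
      rw [Finset.sum_congr rfl (fun j _ => abs_of_nonneg (softmax_nonneg zp j))]
      exact softmax_sum_one zp
    calc eucNorm T1 ≤ (∑ j, |p j|) * frob (Y - Y') := h
      _ = frob (Y - Y') := by rw [habs, one_mul]
  -- bound T2
  have hM : ∀ j, |zp j - zq j| ≤ frob (Y - Y') * (specNorm A * r) := by
    intro j
    have h1 : zp j - zq j = dotProduct (fun i => (Y - Y') i j) (A.mulVec x) := by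
      have he : (fun i => (Y - Y') i j)
          = (fun i => Y i j) - (fun i => Y' i j) := rfl
      rw [he, sub_dotProduct]
    rw [h1]
    calc |dotProduct (fun i => (Y - Y') i j) (A.mulVec x)|
        ≤ eucNorm (fun i => (Y - Y') i j) * eucNorm (A.mulVec x) := abs_dot_le _ _
      _ ≤ frob (Y - Y') * (specNorm A * r) := by
          have h2 : eucNorm (A.mulVec x) ≤ specNorm A * r := by
            calc eucNorm (A.mulVec x) ≤ specNorm A * eucNorm x := eucNorm_mulVec_le_spec A x
              _ ≤ specNorm A * r := mul_le_mul_of_nonneg_left hx hA0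
          exact mul_le_mul (eucNorm_col_le_frob _ j) h2 (eucNorm_nonneg _) hF0
  have hB2 : eucNorm T2 ≤ 2 * specNorm A * r^2 * frob (Y - Y') := by
    have hcol : ∀ j, eucNorm (fun i => Y' i j) ≤ r :=
      fun j => le_trans (eucNorm_col_le_frob Y' j) hY'
    have h := eucNorm_weighted_le (fun j => p j - q j) (fun j i => Y' i j) hcol hr
    have hl1 : ∑ j, |p j - q j| ≤ 2 * (frob (Y - Y') * (specNorm A * r)) :=
      softmax_l1_lipschitz zq zp _ hM
    calc eucNorm T2 ≤ (∑ j, |p j - q j|) * r := h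
      _ ≤ (2 * (frob (Y - Y') * (specNorm A * r))) * r := by
          apply mul_le_mul_of_nonneg_right hl1 hr
      _ = 2 * specNorm A * r^2 * frob (Y - Y') := by ring
  -- bound T3
  have hB3 : eucNorm T3 ≤ specNorm A * r^2 * eucNorm u := by
    have hT3' : T3 = Y'.mulVec (fun j => q j - p'' j) := by
      funext i
      simp only [hT3, Matrix.mulVec, dotProduct]
      exact Finset.sum_congr rfl fun j _ => mul_comm _ _
    have hsz : eucNorm (fun j => q j - p'' j) ≤ eucNorm (fun j => zq j - zr j) :=
      softmax_l2_lipschitz zr zq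
    have hzz : (fun j => zq j - zr j)
        = fun j => dotProduct (fun i => Y' i j) (A.mulVec u) := by
      funext j
      rw [hzq, hzr, ← dotProduct_sub, ← Matrix.mulVec_sub]
      rfl
    have h4 : eucNorm (fun j => zq j - zr j) ≤ r * (specNorm A * eucNorm u) := by
      rw [hzz]
      calc eucNorm (fun j => dotProduct (fun i => Y' i j) (A.mulVec u))
          ≤ frob Y' * eucNorm (A.mulVec u) := eucNorm_colsdot_le Y' (A.mulVec u)
        _ ≤ r * (specNorm A * eucNorm u) :=
            mul_le_mul hY' (eucNorm_mulVec_le_spec A u) (eucNorm_nonneg _) hr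
    calc eucNorm T3 = eucNorm (Y'.mulVec (fun j => q j - p'' j)) := by rw [hT3']
      _ ≤ frob Y' * eucNorm (fun j => q j - p'' j) := eucNorm_mulVec_le_frob _ _
      _ ≤ r * (r * (specNorm A * eucNorm u)) := by
          apply mul_le_mul hY' (le_trans hsz h4) (eucNorm_nonneg _) hr
      _ = specNorm A * r^2 * eucNorm u := by ring
  -- combine
  have hTbound : eucNorm T ≤ frob (Y - Y') + 2 * specNorm A * r^2 * frob (Y - Y')
      + specNorm A * r^2 * eucNorm u := by
    have he : T = fun i => T1 i + (T2 i + T3 i) := funext hsplit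
    calc eucNorm T = eucNorm (fun i => T1 i + (T2 i + T3 i)) := by rw [← he]
      _ ≤ eucNorm T1 + eucNorm (fun i => T2 i + T3 i) := eucNorm_triangle _ _
      _ ≤ eucNorm T1 + (eucNorm T2 + eucNorm T3) := by
          linarith [eucNorm_triangle T2 T3]
      _ ≤ frob (Y - Y') + 2 * specNorm A * r^2 * frob (Y - Y')
          + specNorm A * r^2 * eucNorm u := by linarith
  rw [hstep1]
  calc eucNorm (Wv.mulVec T) ≤ specNorm Wv * eucNorm T := eucNorm_mulVec_le_spec Wv T
    _ ≤ specNorm Wv * (frob (Y - Y') + 2 * specNorm A * r^2 * frob (Y - Y')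
        + specNorm A * r^2 * eucNorm u) :=
      mul_le_mul_of_nonneg_left hTbound (specNorm_nonneg Wv)

end MainAux


open Aux Aux2 Aux3 NrmAux MainAux in
/-- Proposition 3 of the paper (Castin et al.): masked single-head self-attention
restricted to the Frobenius ball of radius `r` satisfies the same Lipschitz bound
`√3 ‖Wv‖₂ √(‖A‖₂² r⁴ (4n + 1) + n)` as its unmasked counterpart. -/
theorem masked_self_attention_lipschitz_bound
    (d s' n : ℕ) (hd : 0 < d) (hs' : 0 < s') (hn : 0 < n) (r : ℝ) (hr : 0 < r)
    (A : Matrix (Fin d) (Fin d) ℝ) (Wv : Matrix (Fin s') (Fin d) ℝ)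
    (X X' : Matrix (Fin d) (Fin n) ℝ) (hX : frob X ≤ r) (hX' : frob X' ≤ r) :
    frob (maskedSatt A Wv X - maskedSatt A Wv X')
      ≤ Real.sqrt 3 * specNorm Wv *
          Real.sqrt (specNorm A ^ 2 * r ^ 4 * (4 * n + 1) + n) * frob (X - X') := by
  set K := frob (X - X') with hK
  set sA := specNorm A with hsA
  set sW := specNorm Wv with hsW
  have hK0 : 0 ≤ K := frob_nonneg _
  have hsA0 : 0 ≤ sA := specNorm_nonneg A
  have hsW0 : 0 ≤ sW := specNorm_nonneg Wv
  set D := maskedSatt A Wv X - maskedSatt A Wv X' with hD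
  set Fl : Fin n → ℝ := fun l => frob (firstCols (X - X') l) with hFl
  set el : Fin n → ℝ := fun l => eucNorm (fun i => (X - X') i l) with hel
  -- per-column bound
  have hcol : ∀ l : Fin n, eucNorm (fun i => D i l) ≤
      sW * (Fl l + 2 * sA * r^2 * Fl l + sA * r^2 * el l) := by
    intro l
    have hYY : firstCols X l - firstCols X' l = firstCols (X - X') l := by
      ext i j; simp [firstCols, Matrix.sub_apply]
    have hDl : (fun i => D i l) = (fun i =>
        satt A Wv (fun i' => X i' l) (firstCols X l) i -
        satt A Wv (fun i' => X' i' l) (firstCols X' l) i) := by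
      funext i
      simp [hD, Matrix.sub_apply, maskedSatt]
    have hb := satt_diff_bound A Wv (fun i => X i l) (fun i => X' i l)
      (firstCols X l) (firstCols X' l) r
      (le_trans (frob_firstCols_le X' l) hX')
      (le_trans (eucNorm_col_le_frob X l) hX) hr.le
    rw [hDl]
    have hxx : (fun i => X i l - X' i l) = fun i => (X - X') i l := by
      funext i; simp [Matrix.sub_apply]
    rw [hYY, hxx] at hb
    exact hb
  -- squared per-column bound
  have hcolsq : ∀ l : Fin n, (eucNorm (fun i => D i l))^2 ≤
      3 * sW^2 * ((1 + 4 * sA^2 * r^4) * (Fl l)^2 + sA^2 * r^4 * (el l)^2) := by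
    intro l
    have h := hcol l
    have h0 := eucNorm_nonneg (fun i => D i l)
    set a := Fl l; set b := 2 * sA * r^2 * Fl l; set c := sA * r^2 * el l
    have hsq : (eucNorm (fun i => D i l))^2 ≤ (sW * (a + b + c))^2 := by
      apply pow_le_pow_left₀ h0 h
    have h3 : (sW * (a + b + c))^2 ≤ 3 * sW^2 * (a^2 + b^2 + c^2) := by
      nlinarith [sq_nonneg (a - b), sq_nonneg (b - c), sq_nonneg (a - c), sq_nonneg sW,
        sq_nonneg (a + b + c)]
    calc (eucNorm (fun i => D i l))^2 ≤ 3 * sW^2 * (a^2 + b^2 + c^2) := le_trans hsq h3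
      _ = 3 * sW^2 * ((1 + 4 * sA^2 * r^4) * (Fl l)^2 + sA^2 * r^4 * (el l)^2) := by
        simp only [a, b, c]; ring
  -- sum the squares
  have hFlK : ∀ l : Fin n, (Fl l)^2 ≤ K^2 := by
    intro l
    have h1 : Fl l ≤ K := frob_firstCols_le (X - X') l
    exact pow_le_pow_left₀ (frob_nonneg _) h1 2
  have hsumFl : ∑ l, (Fl l)^2 ≤ (n : ℝ) * K^2 := by
    calc ∑ l, (Fl l)^2 ≤ ∑ _l : Fin n, K^2 := Finset.sum_le_sum fun l _ => hFlK l
      _ = (n : ℝ) * K^2 := by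
        rw [Finset.sum_const, Finset.card_univ, Fintype.card_fin, nsmul_eq_mul]
  have hsumel : ∑ l, (el l)^2 = K^2 := (frob_sq_eq_sum_cols (X - X')).symm
  have hfs : (frob D)^2 ≤ 3 * sW^2 * ((sA^2 * r^4 * (4 * n + 1) + n) * K^2) := by
    rw [frob_sq_eq_sum_cols D]
    calc ∑ l, (eucNorm (fun i => D i l))^2
        ≤ ∑ l, 3 * sW^2 * ((1 + 4 * sA^2 * r^4) * (Fl l)^2 + sA^2 * r^4 * (el l)^2) :=
          Finset.sum_le_sum fun l _ => hcolsq l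
      _ = 3 * sW^2 * ((1 + 4 * sA^2 * r^4) * (∑ l, (Fl l)^2)
            + sA^2 * r^4 * (∑ l, (el l)^2)) := by
          rw [← Finset.mul_sum]
          congr 1
          rw [Finset.sum_add_distrib, ← Finset.mul_sum, ← Finset.mul_sum]
      _ ≤ 3 * sW^2 * ((1 + 4 * sA^2 * r^4) * ((n : ℝ) * K^2)
            + sA^2 * r^4 * K^2) := by
          rw [hsumel]
          have hc0 : 0 ≤ 1 + 4 * sA^2 * r^4 := by positivity
          have := mul_le_mul_of_nonneg_left hsumFl hc0
          nlinarith [sq_nonneg sW]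
      _ = 3 * sW^2 * ((sA^2 * r^4 * (4 * n + 1) + n) * K^2) := by ring
  -- conclude
  have hE0 : (0:ℝ) ≤ sA^2 * r^4 * (4 * n + 1) + n := by positivity
  have hRHS0 : 0 ≤ Real.sqrt 3 * sW * Real.sqrt (sA^2 * r^4 * (4 * n + 1) + n) * K := by
    positivity
  have hRHSsq : (Real.sqrt 3 * sW * Real.sqrt (sA^2 * r^4 * (4 * n + 1) + n) * K)^2
      = 3 * sW^2 * ((sA^2 * r^4 * (4 * n + 1) + n) * K^2) := by
    have h3 : (Real.sqrt 3)^2 = 3 := Real.sq_sqrt (by norm_num)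
    have hE : (Real.sqrt (sA^2 * r^4 * (4 * n + 1) + n))^2
        = sA^2 * r^4 * (4 * n + 1) + n := Real.sq_sqrt hE0
    calc (Real.sqrt 3 * sW * Real.sqrt (sA^2 * r^4 * (4 * n + 1) + n) * K)^2
        = (Real.sqrt 3)^2 * sW^2 * (Real.sqrt (sA^2 * r^4 * (4 * n + 1) + n))^2 * K^2 := by
          ring
      _ = 3 * sW^2 * ((sA^2 * r^4 * (4 * n + 1) + n) * K^2) := by rw [h3, hE]; ring
  calc frob D = Real.sqrt ((frob D)^2) := (Real.sqrt_sq (frob_nonneg D)).symm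
    _ ≤ Real.sqrt ((Real.sqrt 3 * sW * Real.sqrt (sA^2 * r^4 * (4 * n + 1) + n) * K)^2) := by
        apply Real.sqrt_le_sqrt
        rw [hRHSsq]
        exact hfs
    _ = Real.sqrt 3 * sW * Real.sqrt (sA^2 * r^4 * (4 * n + 1) + n) * K :=
        Real.sqrt_sq hRHS0
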